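/- Let v be a complex ℓ'×ℓ matrix with ‖v‖ < 1. Then the map F_v(u) = v − (I − v v*)^{1/2} u (I − v* u)^{-1} (I − v* v)^{1/2} maps the open unit ball {u ∈ ℂ^{ℓ'×ℓ} : ‖u‖ < 1} into itself; i.e., ‖u‖ < 1 implies ‖F_v(u)‖ < 1. -/

import Mathlib

open Matrix
open scoped Matrix.Norms.L2Operator ComplexOrder

/-- The positive semidefinite square root of a positive semidefinite matrix
(the definition removed from Mathlib, restated with its old value). -/
noncomputable def Matrix.PosSemidef.sqrt {n 𝕜 : Type*} [Fintype n] [DecidableEq n] [RCLike 𝕜]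
    {A : Matrix n n 𝕜} (hA : A.PosSemidef) : Matrix n n 𝕜 :=
  hA.isHermitian.eigenvectorUnitary.1 * diagonal ((↑) ∘ (√·) ∘ hA.isHermitian.eigenvalues) *
    (star hA.isHermitian.eigenvectorUnitary : Matrix n n 𝕜)

noncomputable def Fv {l l' : ℕ} (v : Matrix (Fin l') (Fin l) ℂ)
    (h1 : (1 - vᴴ * v).PosSemidef) (h2 : (1 - v * vᴴ).PosSemidef)
    (u : Matrix (Fin l') (Fin l) ℂ) : Matrix (Fin l') (Fin l) ℂ :=
  v - h2.sqrt * u * (1 - vᴴ * u)⁻¹ * h1.sqrt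

lemma Matrix.PosSemidef.posSemidef_sqrt {n 𝕜 : Type*} [Fintype n] [DecidableEq n] [RCLike 𝕜]
    {A : Matrix n n 𝕜} (hA : A.PosSemidef) : hA.sqrt.PosSemidef := by
  unfold Matrix.PosSemidef.sqrt
  exact (PosSemidef.diagonal (fun i => RCLike.ofReal_nonneg.mpr (Real.sqrt_nonneg _))).mul_mul_conjTranspose_same _

lemma Matrix.PosSemidef.sqrt_mul_self {n 𝕜 : Type*} [Fintype n] [DecidableEq n] [RCLike 𝕜]
    {A : Matrix n n 𝕜} (hA : A.PosSemidef) : hA.sqrt * hA.sqrt = A := by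
  set U : Matrix n n 𝕜 := hA.isHermitian.eigenvectorUnitary.1
  have hU' : star U * U = 1 := Matrix.mem_unitaryGroup_iff'.mp hA.isHermitian.eigenvectorUnitary.2
  have hspec := hA.isHermitian.spectral_theorem
  rw [Unitary.conjStarAlgAut_apply] at hspec
  set D : Matrix n n 𝕜 := diagonal ((↑) ∘ (√·) ∘ hA.isHermitian.eigenvalues)
  have hd : D * D = diagonal (RCLike.ofReal ∘ hA.isHermitian.eigenvalues) := by
    rw [diagonal_mul_diagonal]; congr 1; funext i
    simp [← RCLike.ofReal_mul, Real.mul_self_sqrt (hA.eigenvalues_nonneg i)]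
  unfold Matrix.PosSemidef.sqrt
  calc _ = U * (D * (star U * U) * D) * star U := by simp only [U, D, mul_assoc]
    _ = A := by rw [hU', mul_one, hd]; exact hspec.symm

lemma inner_piLp_equiv_symm_aux {ι : Type*} [Fintype ι] (x y : ι → ℂ) :
    inner ℂ ((WithLp.equiv 2 (ι → ℂ)).symm x) ((WithLp.equiv 2 (ι → ℂ)).symm y) = star x ⬝ᵥ y :=
  (EuclideanSpace.inner_toLp_toLp x y).trans (dotProduct_comm _ _)

open Polynomial

lemma quadC {m n : ℕ} (A : Matrix (Fin m) (Fin n) ℂ) (x : Fin n → ℂ) :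
    star x ⬝ᵥ ((1 - Aᴴ * A) *ᵥ x) =
      ((‖(WithLp.equiv 2 (Fin n → ℂ)).symm x‖ ^ 2
        - ‖(WithLp.equiv 2 (Fin m → ℂ)).symm (A *ᵥ x)‖ ^ 2 : ℝ) : ℂ) := by
  have h1 : star x ⬝ᵥ ((1 : Matrix (Fin n) (Fin n) ℂ) *ᵥ x)
      = ((‖(WithLp.equiv 2 (Fin n → ℂ)).symm x‖ ^ 2 : ℝ) : ℂ) := by
    rw [one_mulVec, ← inner_piLp_equiv_symm_aux, inner_self_eq_norm_sq_to_K]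
    norm_num
  have h2 : star x ⬝ᵥ ((Aᴴ * A) *ᵥ x)
      = ((‖(WithLp.equiv 2 (Fin m → ℂ)).symm (A *ᵥ x)‖ ^ 2 : ℝ) : ℂ) := by
    rw [← mulVec_mulVec, dotProduct_mulVec, ← star_mulVec,
      ← inner_piLp_equiv_symm_aux, inner_self_eq_norm_sq_to_K]
    norm_num
  rw [sub_mulVec, dotProduct_sub, h1, h2]
  push_cast
  ring

lemma posDef_of_norm_lt_one {m n : ℕ} (A : Matrix (Fin m) (Fin n) ℂ) (h : ‖A‖ < 1) :
    (1 - Aᴴ * A).PosDef := by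
  rw [posDef_iff_dotProduct_mulVec]
  constructor
  · simp [Matrix.IsHermitian, conjTranspose_sub, conjTranspose_mul]
  · intro x hx
    rw [quadC]
    rw [show ((0:ℂ) = ((0:ℝ):ℂ)) from by norm_num, Complex.real_lt_real]
    have hx' : (WithLp.equiv 2 (Fin n → ℂ)).symm x ≠ 0 := by
      simpa using hx
    have hxn : 0 < ‖(WithLp.equiv 2 (Fin n → ℂ)).symm x‖ := norm_pos_iff.mpr hx'
    have hb := l2_opNorm_mulVec A ((WithLp.equiv 2 (Fin n → ℂ)).symm x)
    have : ‖(EuclideanSpace.equiv (Fin m) ℂ).symm (A *ᵥ x)‖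
        < ‖(WithLp.equiv 2 (Fin n → ℂ)).symm x‖ := by
      calc ‖(EuclideanSpace.equiv (Fin m) ℂ).symm (A *ᵥ x)‖
          ≤ ‖A‖ * ‖(WithLp.equiv 2 (Fin n → ℂ)).symm x‖ := by simpa using hb
        _ < 1 * ‖(WithLp.equiv 2 (Fin n → ℂ)).symm x‖ := by
            exact mul_lt_mul_of_pos_right h hxn
        _ = _ := one_mul _
    have : ‖(WithLp.equiv 2 (Fin m → ℂ)).symm (A *ᵥ x)‖
        < ‖(WithLp.equiv 2 (Fin n → ℂ)).symm x‖ := this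
    nlinarith [norm_nonneg ((WithLp.equiv 2 (Fin m → ℂ)).symm (A *ᵥ x))]

lemma norm_lt_one_of_posDef {m n : ℕ} (A : Matrix (Fin m) (Fin n) ℂ)
    (h : (1 - Aᴴ * A).PosDef) : ‖A‖ < 1 := by
  rcases Nat.eq_zero_or_pos n with hn | hn
  · subst hn
    have : A = 0 := Subsingleton.elim _ _
    simp [this]
  · haveI : Nonempty (Fin n) := ⟨⟨0, hn⟩⟩
    set E := EuclideanSpace ℂ (Fin n)
    set F := EuclideanSpace ℂ (Fin m)
    set T : E →L[ℂ] F :=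
      (toEuclideanLin (𝕜 := ℂ) (m := Fin m) (n := Fin n)).trans
        LinearMap.toContinuousLinearMap A with hT
    have hTA : ‖A‖ = ‖T‖ := l2_opNorm_def A
    -- strict contraction on nonzero vectors
    have key : ∀ x : E, x ≠ 0 → ‖T x‖ < ‖x‖ := by
      intro x hx
      have hx' : (WithLp.equiv 2 (Fin n → ℂ)) x ≠ 0 := by simpa using hx
      have := h.dotProduct_mulVec_pos hx'
      rw [quadC] at this
      rw [show ((0:ℂ) = ((0:ℝ):ℂ)) from by norm_num, Complex.real_lt_real] at this
      have hTx : T x = (WithLp.equiv 2 (Fin m → ℂ)).symm (A *ᵥ (WithLp.equiv 2 (Fin n → ℂ)) x) := by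
        rfl
      have hxx : (WithLp.equiv 2 (Fin n → ℂ)).symm ((WithLp.equiv 2 (Fin n → ℂ)) x) = x := by
        simp
      rw [hxx] at this
      rw [hTx]
      nlinarith [norm_nonneg ((WithLp.equiv 2 (Fin m → ℂ)).symm (A *ᵥ (WithLp.equiv 2 (Fin n → ℂ)) x)), norm_nonneg x]
    -- maximize on the sphere
    obtain ⟨x0, hx0s, hx0max⟩ :=
      (isCompact_sphere (0 : E) 1).exists_isMaxOn
        (NormedSpace.sphere_nonempty.mpr zero_le_one)
        (continuous_norm.comp T.continuous).continuousOn
    have hx0n : ‖x0‖ = 1 := by simpa using mem_sphere_iff_norm.mp hx0s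
    have hx0ne : x0 ≠ 0 := by
      intro h0; rw [h0] at hx0n; simp at hx0n
    have hc : ‖T x0‖ < 1 := by simpa [hx0n] using key x0 hx0ne
    have hbound : ∀ x : E, ‖T x‖ ≤ ‖T x0‖ * ‖x‖ := by
      intro x
      rcases eq_or_ne x 0 with rfl | hx
      · simp
        exact le_of_eq norm_zero
      · have hxn : 0 < ‖x‖ := norm_pos_iff.mpr hx
        have hy : (‖x‖⁻¹ • x) ∈ Metric.sphere (0 : E) 1 := by
          simp [norm_smul, abs_of_nonneg, inv_mul_cancel₀ hxn.ne']
        have := hx0max hy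
        simp only [Set.mem_setOf_eq, Function.comp_apply, _root_.map_smul] at this
        have h2 : ‖x‖⁻¹ * ‖T x‖ ≤ ‖T x0‖ := by
          simpa [norm_smul, abs_of_nonneg hxn.le] using this
        calc ‖T x‖ = ‖x‖ * (‖x‖⁻¹ * ‖T x‖) := by field_simp
          _ ≤ ‖x‖ * ‖T x0‖ := by exact mul_le_mul_of_nonneg_left h2 hxn.le
          _ = ‖T x0‖ * ‖x‖ := mul_comm _ _
    have : ‖T‖ ≤ ‖T x0‖ := T.opNorm_le_bound (norm_nonneg _) hbound
    rw [hTA]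
    exact lt_of_le_of_lt this hc

lemma conjPowAux {n : Type*} [Fintype n] [DecidableEq n] (U D : Matrix n n ℂ)
    (hU : U * Uᴴ = 1) (hU' : Uᴴ * U = 1) (k : ℕ) :
    (U * D * Uᴴ) ^ k = U * D ^ k * Uᴴ := by
  induction k with
  | zero => simp [hU]
  | succ k ih =>
      rw [pow_succ, ih, pow_succ]
      calc U * D ^ k * Uᴴ * (U * D * Uᴴ) = U * D ^ k * (Uᴴ * U) * D * Uᴴ := by
            noncomm_ring
        _ = U * (D ^ k * D) * Uᴴ := by rw [hU']; noncomm_ring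

lemma aeval_conj {n : Type*} [Fintype n] [DecidableEq n] (U D : Matrix n n ℂ)
    (hU : U * Uᴴ = 1) (hU' : Uᴴ * U = 1) (p : ℂ[X]) :
    aeval (U * D * Uᴴ) p = U * (aeval D p) * Uᴴ := by
  rw [aeval_eq_sum_range, aeval_eq_sum_range]
  rw [Finset.mul_sum, Finset.sum_mul]
  refine Finset.sum_congr rfl fun i _ => ?_
  rw [conjPowAux U D hU hU', mul_smul_comm, smul_mul_assoc]

lemma aeval_diagonal {n : Type*} [Fintype n] [DecidableEq n] (d : n → ℂ) (p : ℂ[X]) :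
    aeval (Matrix.diagonal d) p = Matrix.diagonal (fun i => p.eval (d i)) := by
  have h := aeval_algHom_apply (Matrix.diagonalAlgHom (n := n) ℂ (α := ℂ)) d p
  simp only [Matrix.diagonalAlgHom_apply] at h
  have h3 : (aeval d p : n → ℂ) = fun i => eval (d i) p := by
    funext i
    simpa using (aeval_algHom_apply (Pi.evalAlgHom ℂ (fun _ : n => ℂ) i) d p).symm
  rw [h, h3]

lemma aeval_eq_sqrt {n : Type*} [Fintype n] [DecidableEq n] {A : Matrix n n ℂ}
    (hA : A.PosSemidef) (p : Polynomial ℝ)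
    (hp : ∀ i, p.eval (hA.1.eigenvalues i) = Real.sqrt (hA.1.eigenvalues i)) :
    aeval A (p.map (algebraMap ℝ ℂ)) = hA.sqrt := by
  set U : Matrix n n ℂ := (hA.1.eigenvectorUnitary : Matrix n n ℂ) with hUdef
  have hU : U * Uᴴ = 1 := by
    simpa [star_eq_conjTranspose] using
      (Matrix.mem_unitaryGroup_iff.mp hA.1.eigenvectorUnitary.2)
  have hU' : Uᴴ * U = 1 := by
    simpa [star_eq_conjTranspose] using
      (Matrix.mem_unitaryGroup_iff'.mp hA.1.eigenvectorUnitary.2)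
  have hspec : A = U * Matrix.diagonal (RCLike.ofReal ∘ hA.1.eigenvalues) * Uᴴ := by
    simpa [star_eq_conjTranspose, Unitary.conjStarAlgAut_apply] using hA.1.spectral_theorem
  conv_lhs => rw [hspec]
  rw [aeval_conj _ _ hU hU', aeval_diagonal]
  have : (fun i => (p.map (algebraMap ℝ ℂ)).eval ((RCLike.ofReal ∘ hA.1.eigenvalues) i))
      = ((↑) ∘ Real.sqrt ∘ hA.1.eigenvalues : n → ℂ) := by
    funext i
    simp only [Function.comp_apply, eval_map]
    rw [show ((RCLike.ofReal (hA.1.eigenvalues i) : ℂ)) = algebraMap ℝ ℂ (hA.1.eigenvalues i) from rfl,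
      eval₂_hom, hp i]
    rfl
  rw [this]
  rfl

lemma mul_pow_intertwine {m n : Type*} [Fintype m] [Fintype n] [DecidableEq m] [DecidableEq n]
    (v : Matrix m n ℂ) (A : Matrix n n ℂ) (B : Matrix m m ℂ) (h : v * A = B * v) (k : ℕ) :
    v * A ^ k = B ^ k * v := by
  induction k with
  | zero => simp
  | succ k ih =>
      rw [pow_succ, pow_succ, ← Matrix.mul_assoc, ih, Matrix.mul_assoc, h, Matrix.mul_assoc]

lemma mul_aeval_intertwine {m n : Type*} [Fintype m] [Fintype n] [DecidableEq m] [DecidableEq n]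
    (v : Matrix m n ℂ) (A : Matrix n n ℂ) (B : Matrix m m ℂ) (h : v * A = B * v) (q : ℂ[X]) :
    v * aeval A q = aeval B q * v := by
  induction q using Polynomial.induction_on' with
  | add p r hp hr => rw [map_add, map_add, Matrix.mul_add, Matrix.add_mul, hp, hr]
  | monomial k a =>
      rw [aeval_monomial, aeval_monomial,
        show (algebraMap ℂ (Matrix n n ℂ)) a = a • 1 from Algebra.algebraMap_eq_smul_one a,
        show (algebraMap ℂ (Matrix m m ℂ)) a = a • 1 from Algebra.algebraMap_eq_smul_one a]
      have := mul_pow_intertwine v A B h k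
      simp only [smul_mul_assoc, one_mul, Matrix.mul_smul, Matrix.smul_mul]
      rw [this]

lemma sqrt_intertwine {l l' : ℕ} (v : Matrix (Fin l') (Fin l) ℂ)
    (h1 : (1 - vᴴ * v).PosSemidef) (h2 : (1 - v * vᴴ).PosSemidef) :
    v * h1.sqrt = h2.sqrt * v := by
  classical
  set S : Finset ℝ := (Finset.univ.image h1.1.eigenvalues) ∪ (Finset.univ.image h2.1.eigenvalues)
    with hS
  set p : Polynomial ℝ := Lagrange.interpolate S id Real.sqrt with hp
  have hinj : Set.InjOn (id : ℝ → ℝ) S := Function.injective_id.injOn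
  have hev : ∀ x ∈ S, p.eval x = Real.sqrt x := fun x hx =>
    Lagrange.eval_interpolate_at_node Real.sqrt hinj hx
  have e1 : aeval (1 - vᴴ * v) (p.map (algebraMap ℝ ℂ)) = h1.sqrt :=
    aeval_eq_sqrt h1 p fun i => hev _ (Finset.mem_union_left _
      (Finset.mem_image_of_mem _ (Finset.mem_univ i)))
  have e2 : aeval (1 - v * vᴴ) (p.map (algebraMap ℝ ℂ)) = h2.sqrt :=
    aeval_eq_sqrt h2 p fun i => hev _ (Finset.mem_union_right _
      (Finset.mem_image_of_mem _ (Finset.mem_univ i)))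
  have hcomm : v * (1 - vᴴ * v) = (1 - v * vᴴ) * v := by
    rw [Matrix.mul_sub, Matrix.sub_mul, Matrix.mul_one, Matrix.one_mul, Matrix.mul_assoc]
  rw [← e1, ← e2]
  exact mul_aeval_intertwine v _ _ hcomm _

lemma posDef_conj_of_isUnit {n : ℕ} (A C : Matrix (Fin n) (Fin n) ℂ)
    (hA : A.PosDef) (hC : IsUnit C) : (Cᴴ * (A * C)).PosDef := by
  rw [posDef_iff_dotProduct_mulVec]
  constructor
  · show _ᴴ = _
    calc (Cᴴ * (A * C))ᴴ = Cᴴ * (Aᴴ * C) := by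
          simp [conjTranspose_mul, Matrix.mul_assoc]
      _ = Cᴴ * (A * C) := by rw [hA.1]
  · intro x hx
    have hx' : C *ᵥ x ≠ 0 := by
      have hinj := (Matrix.mulVec_injective_iff_isUnit).mpr hC
      intro h0
      exact hx (hinj (by simpa using h0))
    have := hA.dotProduct_mulVec_pos hx'
    simpa only [star_mulVec, dotProduct_mulVec, vecMul_vecMul, ← Matrix.mul_assoc] using this

theorem stmt_12 (l l' : ℕ) (v : Matrix (Fin l') (Fin l) ℂ) (hv : ‖v‖ < 1)
    (h1 : (1 - vᴴ * v).PosSemidef) (h2 : (1 - v * vᴴ).PosSemidef) :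
    ∀ u : Matrix (Fin l') (Fin l) ℂ, ‖u‖ < 1 → ‖Fv v h1 h2 u‖ < 1 := by
  intro u hu
  -- notation
  set s : Matrix (Fin l) (Fin l) ℂ := h1.sqrt with hsdef
  set t : Matrix (Fin l') (Fin l') ℂ := h2.sqrt with htdef
  have hsH : sᴴ = s := h1.posSemidef_sqrt.1
  have htH : tᴴ = t := h2.posSemidef_sqrt.1
  have hs : s * s = 1 - vᴴ * v := h1.sqrt_mul_self
  have ht : t * t = 1 - v * vᴴ := h2.sqrt_mul_self
  have e1 : v * s = t * v := sqrt_intertwine v h1 h2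
  have e1' : s * vᴴ = vᴴ * t := by
    calc s * vᴴ = (v * s)ᴴ := by rw [conjTranspose_mul, hsH]
      _ = (t * v)ᴴ := by rw [e1]
      _ = vᴴ * t := by rw [conjTranspose_mul, htH]
  -- invertibility of 1 - vᴴ u
  set a : Matrix (Fin l) (Fin l) ℂ := vᴴ * u with hadef
  have hanorm : ‖a‖ < 1 := by
    have h1' : ‖a‖ ≤ ‖vᴴ‖ * ‖u‖ := l2_opNorm_mul _ _
    have h2' : ‖vᴴ‖ = ‖v‖ := l2_opNorm_conjTranspose v
    nlinarith [norm_nonneg vᴴ, norm_nonneg u, norm_nonneg v]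
  have hXunit : IsUnit (1 - a) := (Units.oneSub a hanorm).isUnit
  have hXdet : IsUnit (1 - a).det := (Matrix.isUnit_iff_isUnit_det _).mp hXunit
  set W : Matrix (Fin l) (Fin l) ℂ := (1 - a)⁻¹ with hWdef
  have hXW : (1 - a) * W = 1 := Matrix.mul_nonsing_inv _ hXdet
  have hWX : W * (1 - a) = 1 := Matrix.nonsing_inv_mul _ hXdet
  have hW1 : W = 1 + a * W := by
    have h : W - a * W = 1 := by rw [← hXW]; noncomm_ring
    exact sub_eq_iff_eq_add.mp h
  have hW2 : Wᴴ = 1 + Wᴴ * aᴴ := by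
    calc Wᴴ = (1 + a * W)ᴴ := by rw [← hW1]
      _ = 1 + Wᴴ * aᴴ := by simp [conjTranspose_add, conjTranspose_mul]
  have hbr : Wᴴ * W = 1 + a * W + Wᴴ * aᴴ + Wᴴ * aᴴ * (a * W) := by
    have hfold : (1 + Wᴴ * aᴴ) * (1 + a * W) = Wᴴ * W := by rw [← hW1, ← hW2]
    rw [← hfold]; noncomm_ring
  set C : Matrix (Fin l) (Fin l) ℂ := W * s with hCdef
  have hCH : Cᴴ = s * Wᴴ := by rw [hCdef, conjTranspose_mul, hsH]
  have hCC : Cᴴ * C = s * s + s * (a * C) + Cᴴ * (aᴴ * s) + Cᴴ * (aᴴ * (a * C)) := by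
    rw [hCH, hCdef]
    calc s * Wᴴ * (W * s) = s * (Wᴴ * W) * s := by noncomm_ring
      _ = s * (1 + a * W + Wᴴ * aᴴ + Wᴴ * aᴴ * (a * W)) * s := by rw [hbr]
      _ = _ := by noncomm_ring
  set E : Matrix (Fin l') (Fin l) ℂ := u * C with hEdef
  have hG : Fv v h1 h2 u = v - t * E := by
    rw [hEdef, hCdef]
    show v - h2.sqrt * u * (1 - vᴴ * u)⁻¹ * h1.sqrt = _
    rw [← htdef, ← hsdef, ← hadef, ← hWdef, Matrix.mul_assoc, Matrix.mul_assoc]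
  have hGH : (Fv v h1 h2 u)ᴴ = vᴴ - Eᴴ * t := by
    rw [hG, conjTranspose_sub, conjTranspose_mul, htH]
  have hEv : vᴴ * E = a * C := by
    rw [hEdef, ← Matrix.mul_assoc, hadef]
  have hEvH : Eᴴ * v = Cᴴ * aᴴ := by
    calc Eᴴ * v = (vᴴ * E)ᴴ := by simp [conjTranspose_mul]
      _ = (a * C)ᴴ := by rw [hEv]
      _ = Cᴴ * aᴴ := by rw [conjTranspose_mul]
  have m1 : vᴴ * (t * E) = s * (a * C) := by
    rw [← Matrix.mul_assoc, ← e1', Matrix.mul_assoc, hEv]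
  have m2 : Eᴴ * t * v = Cᴴ * (aᴴ * s) := by
    rw [Matrix.mul_assoc, ← e1, ← Matrix.mul_assoc, hEvH, Matrix.mul_assoc]
  have m3 : Eᴴ * t * (t * E) = Cᴴ * (uᴴ * (u * C)) - Cᴴ * (aᴴ * (a * C)) := by
    have h4 : Eᴴ * t * (t * E) = Eᴴ * ((t * t) * E) := by
      rw [Matrix.mul_assoc, ← Matrix.mul_assoc t t E]
    have h5 : Eᴴ * E = Cᴴ * (uᴴ * (u * C)) := by
      rw [hEdef, conjTranspose_mul, Matrix.mul_assoc]
    have h6 : Eᴴ * (v * (vᴴ * E)) = Cᴴ * (aᴴ * (a * C)) := by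
      rw [hEv, ← Matrix.mul_assoc, hEvH, Matrix.mul_assoc]
    rw [h4, ht, Matrix.sub_mul, Matrix.one_mul, Matrix.mul_sub, h5,
      Matrix.mul_assoc v vᴴ E, hEv, ← Matrix.mul_assoc Eᴴ v (a * C), hEvH,
      Matrix.mul_assoc Cᴴ aᴴ (a * C)]
  have key : (1 : Matrix (Fin l) (Fin l) ℂ) - (Fv v h1 h2 u)ᴴ * (Fv v h1 h2 u)
      = Cᴴ * ((1 - uᴴ * u) * C) := by
    rw [hGH, hG, Matrix.sub_mul, Matrix.mul_sub, Matrix.mul_sub, m1, m2, m3,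
      Matrix.sub_mul, Matrix.one_mul, Matrix.mul_sub, Matrix.mul_assoc uᴴ u C, hCC, hs]
    abel
  have hud : (1 - uᴴ * u).PosDef := posDef_of_norm_lt_one u hu
  have hvd : (1 - vᴴ * v).PosDef := posDef_of_norm_lt_one v hv
  have hsunit : IsUnit s := by
    apply (Matrix.isUnit_iff_isUnit_det s).mpr
    have h7 : IsUnit (s * s) := by rw [hs]; exact hvd.isUnit
    have h8 := (Matrix.isUnit_iff_isUnit_det _).mp h7
    rw [Matrix.det_mul] at h8
    exact isUnit_of_mul_isUnit_left h8
  have hWunit : IsUnit W := by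
    rw [hWdef]; exact Matrix.isUnit_nonsing_inv_iff.mpr hXunit
  have hCunit : IsUnit C := by rw [hCdef]; exact hWunit.mul hsunit
  have hpd := posDef_conj_of_isUnit (1 - uᴴ * u) C hud hCunit
  rw [← key] at hpd
  exact norm_lt_one_of_posDef _ hpd
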